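/- arXiv:2008.01646 — 6 statements merged into one kernel-verified Lean document; each statement's English description precedes it below -/
import Mathlib

section
/- Let (Ω, 𝓕, P) be a probability space equipped with a filtration (𝓕_t)_{t∈ℕ}. Let L, q : ℕ → Ω → ℝ be processes adapted to the filtration such that for every t, L_t and q_t are integrable, L_t ≥ 0 almost surely and q_t ≥ 0 almost surely. Let B̂ ∈ ℝ and ε > 0, and suppose that for every t ∈ ℕ the conditional drift bound E[L_{t+1} ∣ 𝓕_t] ≤ L_t + B̂ − ε·q_t holds almost surely. Then for every integer T ≥ 1, (1/T)·Σ_{t=0}^{T−1} E[q_t] ≤ B̂/ε + E[L_0]/(ε·T); in particular, limsup_{T→∞} (1/T)·Σ_{t=0}^{T−1} E[q_t] ≤ B̂/ε. -/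
/-!
Taking expectations in the conditional drift bound gives the deterministic recursion
`E[L (t+1)] ≤ E[L t] + B - ε E[q t]`. Telescoping it over `t < T` and dropping `E[L T] ≥ 0`
yields `ε ∑_{t<T} E[q t] ≤ E[L 0] + T B`; dividing by `ε T` gives the time-average bound, whose
right-hand side tends to `B / ε`.
-/

open MeasureTheory Filter

theorem drift_telescope_le {a b : ℕ → ℝ} {B ε : ℝ}
    (hdrift : ∀ t, a (t + 1) ≤ a t + B - ε * b t) (T : ℕ) :
    a T + ε * ∑ t ∈ Finset.range T, b t ≤ a 0 + T * B := by
  induction T with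
  | zero => simp
  | succ n ih =>
    rw [Finset.sum_range_succ]
    push_cast
    linarith [hdrift n]

theorem drift_average_le {a b : ℕ → ℝ} {B ε : ℝ} (ha : ∀ t, 0 ≤ a t) (hε : 0 < ε)
    (hdrift : ∀ t, a (t + 1) ≤ a t + B - ε * b t) {T : ℕ} (hT : T ≠ 0) :
    (1 / (T : ℝ)) * ∑ t ∈ Finset.range T, b t ≤ B / ε + a 0 / (ε * T) := by
  have hT₀ : (0 : ℝ) < T := by positivity
  have hsum : ε * ∑ t ∈ Finset.range T, b t ≤ a 0 + T * B := by
    linarith [drift_telescope_le hdrift T, ha T]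
  calc (1 / (T : ℝ)) * ∑ t ∈ Finset.range T, b t
      = (ε * ∑ t ∈ Finset.range T, b t) / (ε * T) := by field_simp
    _ ≤ (a 0 + T * B) / (ε * T) := by gcongr
    _ = B / ε + a 0 / (ε * T) := by field_simp; ring

theorem limsup_drift_average_le {a b : ℕ → ℝ} {B ε : ℝ} (ha : ∀ t, 0 ≤ a t) (hb : ∀ t, 0 ≤ b t)
    (hε : 0 < ε) (hdrift : ∀ t, a (t + 1) ≤ a t + B - ε * b t) :
    limsup (fun T : ℕ => (1 / (T : ℝ)) * ∑ t ∈ Finset.range T, b t) atTop ≤ B / ε := by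
  have hbound : Tendsto (fun T : ℕ => B / ε + a 0 / ε * (1 / (T : ℝ))) atTop (nhds (B / ε)) := by
    simpa using (tendsto_one_div_atTop_nhds_zero_nat.const_mul (a 0 / ε)).const_add (B / ε)
  have hle : (fun T : ℕ => (1 / (T : ℝ)) * ∑ t ∈ Finset.range T, b t)
      ≤ᶠ[atTop] fun T : ℕ => B / ε + a 0 / ε * (1 / (T : ℝ)) := by
    filter_upwards [eventually_ne_atTop 0] with T hT
    calc _ ≤ B / ε + a 0 / (ε * T) := drift_average_le ha hε hdrift hT
      _ = _ := by rw [div_mul_eq_div_div, div_eq_mul_one_div (a 0 / ε)]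
  have hcobdd : IsCoboundedUnder (· ≤ ·) atTop
      (fun T : ℕ => (1 / (T : ℝ)) * ∑ t ∈ Finset.range T, b t) :=
    IsCoboundedUnder.of_frequently_ge (a := 0) <| Frequently.of_forall fun T =>
      mul_nonneg (by positivity) (Finset.sum_nonneg fun t _ => hb t)
  exact (limsup_le_limsup hle hcobdd hbound.isBoundedUnder_le).trans_eq hbound.limsup_eq

theorem integral_le_of_condExp_le {Ω : Type*} {m m₀ : MeasurableSpace Ω} {μ : Measure Ω}
    {f g : Ω → ℝ} (hm : m ≤ m₀) [SigmaFinite (μ.trim hm)] (hg : Integrable g μ)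
    (h : μ[f | m] ≤ᵐ[μ] g) : ∫ ω, f ω ∂μ ≤ ∫ ω, g ω ∂μ :=
  (integral_condExp hm).symm.trans_le (integral_mono_ae integrable_condExp hg h)

theorem integral_le_of_condExp_drift_le {Ω : Type*} {m m₀ : MeasurableSpace Ω} {μ : Measure Ω}
    [IsProbabilityMeasure μ] {f g h : Ω → ℝ} {B ε : ℝ} (hm : m ≤ m₀) [SigmaFinite (μ.trim hm)]
    (hg : Integrable g μ) (hh : Integrable h μ)
    (hdrift : μ[f | m] ≤ᵐ[μ] fun ω => g ω + B - ε * h ω) :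
    ∫ ω, f ω ∂μ ≤ ∫ ω, g ω ∂μ + B - ε * ∫ ω, h ω ∂μ := by
  have hgB : Integrable (fun ω => g ω + B) μ := hg.add (integrable_const B)
  have hεh : Integrable (fun ω => ε * h ω) μ := hh.const_mul ε
  calc ∫ ω, f ω ∂μ ≤ ∫ ω, g ω + B - ε * h ω ∂μ :=
        integral_le_of_condExp_le hm (hgB.sub hεh) hdrift
    _ = ∫ ω, g ω ∂μ + B - ε * ∫ ω, h ω ∂μ := by
        rw [integral_sub hgB hεh, integral_add hg (integrable_const B), integral_const,
          integral_const_mul, probReal_univ, one_smul]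

theorem lyapunov_drift_time_average_general
    {Ω : Type*} {m0 : MeasurableSpace Ω} (μ : Measure Ω) [IsProbabilityMeasure μ]
    (ℱ : Filtration ℕ m0) (L q : ℕ → Ω → ℝ)
    (hLint : ∀ t, Integrable (L t) μ) (hqint : ∀ t, Integrable (q t) μ)
    (hLpos : ∀ t, 0 ≤ᵐ[μ] L t) (hqpos : ∀ t, 0 ≤ᵐ[μ] q t)
    (B : ℝ) (ε : ℝ) (hε : 0 < ε)
    (hdrift : ∀ t : ℕ, μ[L (t + 1) | ℱ t] ≤ᵐ[μ] fun ω => L t ω + B - ε * q t ω) :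
    (∀ T : ℕ, 1 ≤ T →
      (1 / (T : ℝ)) * ∑ t ∈ Finset.range T, ∫ ω, q t ω ∂μ
        ≤ B / ε + (∫ ω, L 0 ω ∂μ) / (ε * T)) ∧
    limsup (fun T : ℕ => (1 / (T : ℝ)) * ∑ t ∈ Finset.range T, ∫ ω, q t ω ∂μ) atTop
      ≤ B / ε := by
  have hstep : ∀ t, ∫ ω, L (t + 1) ω ∂μ ≤ ∫ ω, L t ω ∂μ + B - ε * ∫ ω, q t ω ∂μ := fun t =>
    integral_le_of_condExp_drift_le (ℱ.le t) (hLint t) (hqint t) (hdrift t)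
  have hLnn : ∀ t, 0 ≤ ∫ ω, L t ω ∂μ := fun t => integral_nonneg_of_ae (hLpos t)
  have hqnn : ∀ t, 0 ≤ ∫ ω, q t ω ∂μ := fun t => integral_nonneg_of_ae (hqpos t)
  exact ⟨fun T hT => drift_average_le hLnn hε hstep (Nat.one_le_iff_ne_zero.mp hT),
    limsup_drift_average_le hLnn hqnn hε hstep⟩

/-- Lyapunov drift engine: if a nonnegative adapted Lyapunov process `L` has conditional
one-step drift bounded by `B̂ - ε·q t` for a nonnegative adapted penalty process `q`, then the
time-averaged expected penalty is bounded by `B̂/ε + E[L 0]/(ε·T)`, and its limsup by `B̂/ε`. -/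
theorem lyapunov_drift_time_average
    {Ω : Type*} {m0 : MeasurableSpace Ω} (μ : Measure Ω) [IsProbabilityMeasure μ]
    (ℱ : Filtration ℕ m0) (L q : ℕ → Ω → ℝ)
    (hLadapted : Adapted ℱ L) (hqadapted : Adapted ℱ q)
    (hLint : ∀ t, Integrable (L t) μ) (hqint : ∀ t, Integrable (q t) μ)
    (hLpos : ∀ t, 0 ≤ᵐ[μ] L t) (hqpos : ∀ t, 0 ≤ᵐ[μ] q t)
    (B : ℝ) (ε : ℝ) (hε : 0 < ε)
    (hdrift : ∀ t : ℕ, μ[L (t + 1) | ℱ t] ≤ᵐ[μ] fun ω => L t ω + B - ε * q t ω) :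
    (∀ T : ℕ, 1 ≤ T →
      (1 / (T : ℝ)) * ∑ t ∈ Finset.range T, ∫ ω, q t ω ∂μ
        ≤ B / ε + (∫ ω, L 0 ω ∂μ) / (ε * T)) ∧
    limsup (fun T : ℕ => (1 / (T : ℝ)) * ∑ t ∈ Finset.range T, ∫ ω, q t ω ∂μ) atTop
      ≤ B / ε :=
  lyapunov_drift_time_average_general μ ℱ L q hLint hqint hLpos hqpos B ε hε hdrift
end

section
/- Let S (switches) and C (controllers) be finite types. Let Q^S : S → ℝ and Q^C : C → ℝ be nonnegative, let λ : S → ℝ satisfy 0 ≤ λ_i ≤ λ_max for all i, let μ^S : S → ℝ and μ^C : C → ℝ satisfy 0 ≤ μ^S_i ≤ μ_max and 0 ≤ μ^C_j ≤ μ_max, and let I_{i,k} ∈ {0,1} for each i ∈ S and each k ∈ {i} ∪ C satisfy I_{i,i} + Σ_{j∈C} I_{i,j} = 1 for every i. Define the updated backlogs Q^S_i' = [Q^S_i + I_{i,i}·λ_i − μ^S_i]⁺ and Q^C_j' = [Q^C_j + Σ_{i∈S} I_{i,j}·λ_i − μ^C_j]⁺, and the Lyapunov function L(Q) = (1/2)·Σ_{i∈S}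 (Q^S_i)² + (1/2)·Σ_{j∈C} (Q^C_j)². Then L(Q') − L(Q) ≤ (1/2)·(|S| + |C|)·μ_max² + (1/2)·|S|²·λ_max² + Σ_{i∈S} Q^S_i·(I_{i,i}·λ_i − μ^S_i) + Σ_{j∈C} Q^C_j·(Σ_{i∈S} I_{i,j}·λ_i − μ^C_j). -/
/-! Expanding the square, `[Q + A - μ]⁺² ≤ (Q + A - μ)² ≤ Q² + A² + μ² + 2Q(A - μ)` for every queue,
using `(A - μ)² ≤ A² + μ²` for nonnegative `A, μ`. Summing, the drift is bounded by the linear term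
plus the sums of squared services and squared arrivals. The services contribute at most
`(|S| + |C|) μ_max²`. The arrivals are nonnegative and, since every switch sends its requests to
exactly one queue, they add up to `Σ λᵢ ≤ |S| λ_max`; so their squares add up to at most `(|S| λ_max)²`. -/

open Finset

section OrderedRing

variable {R : Type*} [CommRing R] [LinearOrder R] [IsStrictOrderedRing R]

lemma max_zero_sq_le_sq (x : R) : max 0 x ^ 2 ≤ x ^ 2 := by
  rcases le_total x 0 with hx | hx
  · simp [max_eq_left hx, sq_nonneg]
  · rw [max_eq_right hx]

lemma sub_sq_le_sq_add_sq {a b : R} (ha : 0 ≤ a) (hb : 0 ≤ b) : (a - b) ^ 2 ≤ a ^ 2 + b ^ 2 := by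
  nlinarith [mul_nonneg ha hb]

lemma max_zero_add_sub_sq_le (Q : R) {A μ : R} (hA : 0 ≤ A) (hμ : 0 ≤ μ) :
    max 0 (Q + A - μ) ^ 2 ≤ Q ^ 2 + A ^ 2 + μ ^ 2 + 2 * (Q * (A - μ)) :=
  calc max 0 (Q + A - μ) ^ 2 ≤ (Q + (A - μ)) ^ 2 := by rw [← add_sub_assoc]; exact max_zero_sq_le_sq _
    _ = Q ^ 2 + (A - μ) ^ 2 + 2 * (Q * (A - μ)) := by ring
    _ ≤ Q ^ 2 + A ^ 2 + μ ^ 2 + 2 * (Q * (A - μ)) := by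
      grw [sub_sq_le_sq_add_sq hA hμ, ← add_assoc]

variable {ι : Type*} [Fintype ι]

lemma sum_max_zero_add_sub_sq_le (Q : ι → R) {A μ : ι → R} (hA : ∀ i, 0 ≤ A i)
    (hμ : ∀ i, 0 ≤ μ i) :
    ∑ i, max 0 (Q i + A i - μ i) ^ 2 ≤
      ∑ i, Q i ^ 2 + ∑ i, A i ^ 2 + ∑ i, μ i ^ 2 + 2 * ∑ i, Q i * (A i - μ i) := by
  simp only [mul_sum, ← sum_add_distrib]
  exact sum_le_sum fun i _ => max_zero_add_sub_sq_le (Q i) (hA i) (hμ i)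

lemma sum_le_card_mul {f : ι → R} {M : R} (hf : ∀ i, f i ≤ M) :
    ∑ i, f i ≤ Fintype.card ι * M := by
  simpa using sum_le_card_nsmul univ f M fun i _ => hf i

lemma sum_sq_le_card_mul_sq {f : ι → R} {M : R} (hf : ∀ i, 0 ≤ f i ∧ f i ≤ M) :
    ∑ i, f i ^ 2 ≤ Fintype.card ι * M ^ 2 :=
  sum_le_card_mul fun i => pow_le_pow_left₀ (hf i).1 (hf i).2 2

end OrderedRing

section Routing

variable {R : Type*} {S C : Type*} [Fintype S] [Fintype C]

lemma sum_routed_eq_sum [CommSemiring R] (lam Iself : S → R) (I : S → C → R)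
    (hone : ∀ i, Iself i + ∑ j, I i j = 1) :
    ∑ i, Iself i * lam i + ∑ j, ∑ i, I i j * lam i = ∑ i, lam i := by
  rw [sum_comm, ← sum_add_distrib]
  refine sum_congr rfl fun i _ => ?_
  rw [← sum_mul, ← add_mul, hone i, one_mul]

lemma sum_sq_routed_le_sq_sum [CommSemiring R] [PartialOrder R] [IsOrderedRing R]
    {lam Iself : S → R} {I : S → C → R} (hlam : ∀ i, 0 ≤ lam i)
    (hIself : ∀ i, 0 ≤ Iself i) (hI : ∀ i j, 0 ≤ I i j) (hone : ∀ i, Iself i + ∑ j, I i j = 1) :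
    ∑ i, (Iself i * lam i) ^ 2 + ∑ j, (∑ i, I i j * lam i) ^ 2 ≤ (∑ i, lam i) ^ 2 := by
  let arrivals : S ⊕ C → R := Sum.elim (fun i => Iself i * lam i) fun j => ∑ i, I i j * lam i
  have harrivals : ∀ k, 0 ≤ arrivals k := by
    rintro (i | j)
    · exact mul_nonneg (hIself i) (hlam i)
    · exact sum_nonneg fun i _ => mul_nonneg (hI i j) (hlam i)
  have hsq : ∑ k, arrivals k ^ 2 ≤ (∑ k, arrivals k) ^ 2 :=
    sum_sq_le_sq_sum_of_nonneg fun k _ => harrivals k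
  simpa only [arrivals, Fintype.sum_sum_type, Sum.elim_inl, Sum.elim_inr,
    sum_routed_eq_sum lam Iself I hone] using hsq

end Routing

theorem sdn_one_slot_drift_bound_general
    {S C : Type*} [Fintype S] [Fintype C]
    (QS : S → ℝ) (QC : C → ℝ)
    (lam : S → ℝ) (lamMax : ℝ) (hlam : ∀ i, 0 ≤ lam i ∧ lam i ≤ lamMax)
    (muS : S → ℝ) (muC : C → ℝ) (muMax : ℝ)
    (hmuS : ∀ i, 0 ≤ muS i ∧ muS i ≤ muMax)
    (hmuC : ∀ j, 0 ≤ muC j ∧ muC j ≤ muMax)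
    (Iself : S → ℝ) (I : S → C → ℝ)
    (hIself : ∀ i, Iself i = 0 ∨ Iself i = 1)
    (hI : ∀ i j, I i j = 0 ∨ I i j = 1)
    (hone : ∀ i, Iself i + ∑ j, I i j = 1) :
    (((1 : ℝ) / 2) * ∑ i, (max 0 (QS i + Iself i * lam i - muS i)) ^ 2
        + ((1 : ℝ) / 2) * ∑ j, (max 0 (QC j + (∑ i, I i j * lam i) - muC j)) ^ 2)
      - (((1 : ℝ) / 2) * ∑ i, (QS i) ^ 2 + ((1 : ℝ) / 2) * ∑ j, (QC j) ^ 2)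
    ≤ ((1 : ℝ) / 2) * ((Fintype.card S : ℝ) + (Fintype.card C : ℝ)) * muMax ^ 2
      + ((1 : ℝ) / 2) * (Fintype.card S : ℝ) ^ 2 * lamMax ^ 2
      + ∑ i, QS i * (Iself i * lam i - muS i)
      + ∑ j, QC j * ((∑ i, I i j * lam i) - muC j) := by
  have hlam0 i := (hlam i).1
  have hIself0 i : 0 ≤ Iself i := by rcases hIself i with h | h <;> simp [h]
  have hI0 i j : 0 ≤ I i j := by rcases hI i j with h | h <;> simp [h]
  have hswitches := sum_max_zero_add_sub_sq_le QS (A := fun i => Iself i * lam i)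
    (fun i => mul_nonneg (hIself0 i) (hlam0 i)) fun i => (hmuS i).1
  have hcontrollers := sum_max_zero_add_sub_sq_le QC (A := fun j => ∑ i, I i j * lam i)
    (fun j => sum_nonneg fun i _ => mul_nonneg (hI0 i j) (hlam0 i)) fun j => (hmuC j).1
  have harrivals : ∑ i, (Iself i * lam i) ^ 2 + ∑ j, (∑ i, I i j * lam i) ^ 2 ≤
      (Fintype.card S * lamMax) ^ 2 :=
    (sum_sq_routed_le_sq_sum hlam0 hIself0 hI0 hone).trans <|
      pow_le_pow_left₀ (sum_nonneg fun i _ => hlam0 i) (sum_le_card_mul fun i => (hlam i).2) 2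
  have hservS := sum_sq_le_card_mul_sq hmuS
  have hservC := sum_sq_le_card_mul_sq hmuC
  linarith

/-- One-slot Lyapunov drift bound for the SDN switch/controller queueing model. -/
theorem sdn_one_slot_drift_bound
    {S C : Type*} [Fintype S] [Fintype C]
    (QS : S → ℝ) (QC : C → ℝ) (hQS : ∀ i, 0 ≤ QS i) (hQC : ∀ j, 0 ≤ QC j)
    (lam : S → ℝ) (lamMax : ℝ) (hlam : ∀ i, 0 ≤ lam i ∧ lam i ≤ lamMax)
    (muS : S → ℝ) (muC : C → ℝ) (muMax : ℝ)
    (hmuS : ∀ i, 0 ≤ muS i ∧ muS i ≤ muMax)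
    (hmuC : ∀ j, 0 ≤ muC j ∧ muC j ≤ muMax)
    (Iself : S → ℝ) (I : S → C → ℝ)
    (hIself : ∀ i, Iself i = 0 ∨ Iself i = 1)
    (hI : ∀ i j, I i j = 0 ∨ I i j = 1)
    (hone : ∀ i, Iself i + ∑ j, I i j = 1) :
    (((1 : ℝ) / 2) * ∑ i, (max 0 (QS i + Iself i * lam i - muS i)) ^ 2
        + ((1 : ℝ) / 2) * ∑ j, (max 0 (QC j + (∑ i, I i j * lam i) - muC j)) ^ 2)
      - (((1 : ℝ) / 2) * ∑ i, (QS i) ^ 2 + ((1 : ℝ) / 2) * ∑ j, (QC j) ^ 2)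
    ≤ ((1 : ℝ) / 2) * ((Fintype.card S : ℝ) + (Fintype.card C : ℝ)) * muMax ^ 2
      + ((1 : ℝ) / 2) * (Fintype.card S : ℝ) ^ 2 * lamMax ^ 2
      + ∑ i, QS i * (Iself i * lam i - muS i)
      + ∑ j, QC j * ((∑ i, I i j * lam i) - muC j) :=
  sdn_one_slot_drift_bound_general QS QC lam lamMax hlam muS muC muMax hmuS hmuC Iself I hIself hI
    hone
end

section
/- Let ι be a type, let 𝓕 be a nonempty finite family of finite subsets of ι, let Q, x̄, x̃ : ι → ℝ, and let V ∈ ℝ. Suppose f ∈ 𝓕 minimizes f'' ↦ Σ_{n∈f''} (Q_n − V·x̃_n) over 𝓕, and f' ∈ 𝓕 minimizes f'' ↦ Σ_{n∈f''} (Q_n − V·x̄_n) over 𝓕. Then for every f* ∈ 𝓕, Σ_{n∈f} (Q_n − V·x̄_n) − Σ_{n∈f*} (Q_n − V·x̄_n) ≤ V·( Σ_{n∈f} (x̃_n − x̄_n) + Σ_{n∈f'} (x̄_n − x̃_n) ). -/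
/-!
The true-mean cost of `f` exceeds that of `f'`, hence that of any `f*`, by at most the estimation
error on `f` plus the estimation error on `f'`: swap the true means for the estimates on `f`,
use that `f` is greedy for the estimates to pass to `f'`, swap back on `f'`, and finish with the
optimality of `f'` for the true means.
-/

open Finset

theorem sub_le_of_isMinOn_of_isMinOn {β α : Type*} [AddCommGroup α] [PartialOrder α]
    [IsOrderedAddMonoid α] {g h : β → α} {s : Set β} {a b c : β}
    (ha : IsMinOn g s a) (hb : b ∈ s) (hb' : IsMinOn h s b) (hc : c ∈ s) :
    h a - h c ≤ (h a - g a) + (g b - h b) :=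
  calc h a - h c ≤ h a - h b := sub_le_sub_left (isMinOn_iff.mp hb' c hc) _
    _ = (h a - g a) + (g a - h b) := by abel
    _ ≤ (h a - g a) + (g b - h b) := by gcongr; exact isMinOn_iff.mp ha b hb

theorem sum_sub_mul_sub_sum_sub_mul {ι : Type*} (s : Finset ι) (Q a b : ι → ℝ) (V : ℝ) :
    ∑ n ∈ s, (Q n - V * a n) - ∑ n ∈ s, (Q n - V * b n) = V * ∑ n ∈ s, (b n - a n) := by
  rw [← sum_sub_distrib, mul_sum]
  exact sum_congr rfl fun n _ => by ring

theorem greedy_comparison_decomposition_general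
    {ι : Type*} (F : Finset (Finset ι))
    (Q xbar xtil : ι → ℝ) (V : ℝ)
    (f : Finset ι)
    (hfmin : ∀ f'' ∈ F, ∑ n ∈ f, (Q n - V * xtil n) ≤ ∑ n ∈ f'', (Q n - V * xtil n))
    (f' : Finset ι) (hf' : f' ∈ F)
    (hf'min : ∀ f'' ∈ F, ∑ n ∈ f', (Q n - V * xbar n) ≤ ∑ n ∈ f'', (Q n - V * xbar n))
    (fstar : Finset ι) (hfstar : fstar ∈ F) :
    (∑ n ∈ f, (Q n - V * xbar n)) - ∑ n ∈ fstar, (Q n - V * xbar n)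
      ≤ V * ((∑ n ∈ f, (xtil n - xbar n)) + ∑ n ∈ f', (xbar n - xtil n)) := by
  have key := sub_le_of_isMinOn_of_isMinOn (s := (F : Set (Finset ι)))
    (g := fun s => ∑ n ∈ s, (Q n - V * xtil n)) (h := fun s => ∑ n ∈ s, (Q n - V * xbar n))
    (isMinOn_iff.mpr hfmin) hf' (isMinOn_iff.mpr hf'min) hfstar
  simpa only [sum_sub_mul_sub_sum_sub_mul, mul_add] using key

/-- Key decomposition `Z₁(t) ≤ V·(Z₂(t) + Z₃(t))`: the learning-aided greedy super arm `f`
is compared against any feasible super arm `f*` via the auxiliary super arm `f'` that is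
greedy with respect to the true means. -/
theorem greedy_comparison_decomposition
    {ι : Type*} (F : Finset (Finset ι)) (hF : F.Nonempty)
    (Q xbar xtil : ι → ℝ) (V : ℝ)
    (f : Finset ι) (hf : f ∈ F)
    (hfmin : ∀ f'' ∈ F, ∑ n ∈ f, (Q n - V * xtil n) ≤ ∑ n ∈ f'', (Q n - V * xtil n))
    (f' : Finset ι) (hf' : f' ∈ F)
    (hf'min : ∀ f'' ∈ F, ∑ n ∈ f', (Q n - V * xbar n) ≤ ∑ n ∈ f'', (Q n - V * xbar n))
    (fstar : Finset ι) (hfstar : fstar ∈ F) :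
    (∑ n ∈ f, (Q n - V * xbar n)) - ∑ n ∈ fstar, (Q n - V * xbar n)
      ≤ V * ((∑ n ∈ f, (xtil n - xbar n)) + ∑ n ∈ f', (xbar n - xtil n)) :=
  greedy_comparison_decomposition_general F Q xbar xtil V f hfmin f' hf' hf'min fstar hfstar
end

section
/- Work on a probability space (Ω, 𝓕, P). Let (X_i)_{i≥1} be independent, identically distributed real-valued random variables with X_i ∈ [−1, 0] almost surely and common mean m = E[X_1] (so m ∈ [−1, 0]); write x̂_n := (1/n)·Σ_{i=1}^{n} X_i for the sample mean of the first n observations. Let β > √2, let T ≥ 1 and h ≤ T be natural numbers, and let t_2 < t_3 < ⋯ < t_h be strictly increasing integers with 1 ≤ t_a ≤ T for all a ∈ {2, …, h}. For a ∈ {2, …, h} define the truncated UCB estimate x̃_a := min( x̂_{a−1} + β·√( log(t_a) / (4·(a−1)) ), 0 ). Then Σ_{a=2}^{h} E[ max(0, x̃_a − m) ] ≤ 2·β·√( h·log T ) + G_β, where G_β := Σ_{t=1}^{∞} t^{−β²/2} (which is finite for β > √2). -/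
/-! With `c_a = β √(log t_a / (4 (a - 1)))`, the overestimate at the `a`-th play is at most `2 c_a`
unless the sample mean of the first `a - 1` observations exceeds `m + c_a`, and it never exceeds
`-m ≤ 1`. Hoeffding's inequality bounds the probability of that event by
`exp (-2 (a - 1) c_a²) = t_a ^ (-β²/2)`. Summing over the plays, the radii give
`β √(log T) ∑ 1 / √(a - 1) ≤ 2 β √(h log T)`, and since the `t_a` are distinct the exceptional
probabilities form a sub-sum of `G_β`. -/

open MeasureTheory ProbabilityTheory Real Finset

section

variable {Ω : Type*} {m0 : MeasurableSpace Ω} {μ : Measure Ω} [IsProbabilityMeasure μ]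

lemma measureReal_sum_range_ge_le_of_mem_Icc {X : ℕ → Ω → ℝ} (hindep : iIndepFun X μ)
    (hmeas : ∀ i, AEMeasurable (X i) μ) {a b m : ℝ} (hbdd : ∀ i, ∀ᵐ ω ∂μ, X i ω ∈ Set.Icc a b)
    (hmean : ∀ i, μ[X i] = m) (n : ℕ) {ε : ℝ} (hε : 0 ≤ ε) :
    μ.real {ω | n * (m + ε) ≤ ∑ i ∈ range n, X i ω} ≤ exp (-2 * n * ε ^ 2 / (b - a) ^ 2) := by
  have hsubG : ∀ i < n, HasSubgaussianMGF (fun ω ↦ X i ω - m) ((‖b - a‖₊ / 2) ^ 2) μ :=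
    fun i _ ↦ hmean i ▸ hasSubgaussianMGF_of_mem_Icc (hmeas i) (hbdd i)
  have hindep' : iIndepFun (fun i ω ↦ X i ω - m) μ :=
    hindep.comp (fun _ x ↦ x - m) fun _ ↦ measurable_sub_const m
  have hevent : {ω | n * (m + ε) ≤ ∑ i ∈ range n, X i ω}
      = {ω | n * ε ≤ ∑ i ∈ range n, (X i ω - m)} := by
    ext ω
    simp only [Set.mem_ofPred_eq, sum_sub_distrib, sum_const, card_range, nsmul_eq_mul]
    constructor <;> intro h <;> linarith
  rw [hevent]
  refine (HasSubgaussianMGF.measure_sum_range_ge_le_of_iIndepFun hindep' hsubG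
    (by positivity)).trans_eq ?_
  congr 1
  rcases n.eq_zero_or_pos with rfl | hn
  · simp
  rcases eq_or_ne b a with rfl | hab
  · simp
  have hab' : b - a ≠ 0 := sub_ne_zero.2 hab
  push_cast [coe_nnnorm, Real.norm_eq_abs, div_pow, sq_abs]
  field_simp

lemma integral_max_zero_min_add_zero_sub_le {Y : Ω → ℝ} (hY : Measurable Y) {c m : ℝ}
    (hc : 0 ≤ c) (hm : -1 ≤ m) :
    ∫ ω, max 0 (min (Y ω + c) 0 - m) ∂μ ≤ 2 * c + μ.real {ω | m + c ≤ Y ω} := by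
  set A := {ω | m + c ≤ Y ω}
  have hA : MeasurableSet A := measurableSet_le measurable_const hY
  have hpointwise : ∀ ω, max 0 (min (Y ω + c) 0 - m) ≤ 2 * c + A.indicator 1 ω := by
    intro ω
    by_cases hω : ω ∈ A
    · rw [Set.indicator_of_mem hω, Pi.one_apply]
      exact max_le (by linarith) (by linarith [min_le_right (Y ω + c) 0])
    · rw [Set.indicator_of_notMem hω]
      have hlt : Y ω < m + c := not_le.1 hω
      exact max_le (by linarith) (by linarith [min_le_left (Y ω + c) 0])
  calc ∫ ω, max 0 (min (Y ω + c) 0 - m) ∂μ ≤ ∫ ω, (2 * c + A.indicator 1 ω) ∂μ :=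
        integral_mono_of_nonneg (ae_of_all _ fun _ ↦ le_max_left _ _)
          ((integrable_const _).add ((integrable_const 1).indicator hA)) (ae_of_all _ hpointwise)
    _ = 2 * c + μ.real A := by
        rw [integral_add (integrable_const _) ((integrable_const 1).indicator hA),
          integral_const, Pi.one_def, integral_indicator_const _ hA]
        simp

lemma integral_ucb_overestimate_le {X : ℕ → Ω → ℝ} (hindep : iIndepFun X μ)
    (hmeas : ∀ i, Measurable (X i)) (hbdd : ∀ i, ∀ᵐ ω ∂μ, X i ω ∈ Set.Icc (-1 : ℝ) 0) {m : ℝ}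
    (hmean : ∀ i, μ[X i] = m) (hm : -1 ≤ m) {β : ℝ} (hβ : 0 ≤ β) {n : ℕ} (hn : 0 < n)
    {τ T : ℕ} (hτ : 1 ≤ τ) (hτT : τ ≤ T) :
    ∫ ω, max 0 (min ((n : ℝ)⁻¹ * ∑ i ∈ range n, X i ω + β * √(log τ / (4 * n))) 0 - m) ∂μ
      ≤ β * √(log T) * (√n)⁻¹ + (τ : ℝ) ^ (-(β ^ 2) / 2) := by
  set c := β * √(log τ / (4 * n))
  have hn' : (0 : ℝ) < n := Nat.cast_pos.2 hn
  have hτ' : (1 : ℝ) ≤ τ := Nat.one_le_cast.2 hτ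
  have hlog : 0 ≤ log τ := log_nonneg hτ'
  have hc : 0 ≤ c := by positivity
  have hevent : {ω | m + c ≤ (n : ℝ)⁻¹ * ∑ i ∈ range n, X i ω}
      = {ω | n * (m + c) ≤ ∑ i ∈ range n, X i ω} := by
    ext ω
    exact le_inv_mul_iff₀ hn'
  have hoeffding : μ.real {ω | n * (m + c) ≤ ∑ i ∈ range n, X i ω} ≤ exp (-2 * n * c ^ 2) := by
    simpa using measureReal_sum_range_ge_le_of_mem_Icc hindep (fun i ↦ (hmeas i).aemeasurable)
      hbdd hmean n hc
  have hradius : 2 * c ≤ β * √(log T) * (√n)⁻¹ := by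
    have hlogT : log τ ≤ log T := log_le_log (by linarith) (Nat.cast_le.2 hτT)
    calc 2 * c ≤ 2 * (β * √(log T / (4 * n))) := by unfold c; gcongr
      _ = β * √(log T) * (√n)⁻¹ := by
        rw [sqrt_div' _ (by positivity), sqrt_mul' _ hn'.le,
          show √4 = 2 by rw [show (4 : ℝ) = 2 ^ 2 by norm_num, sqrt_sq zero_le_two]]
        field_simp
  have htail : exp (-2 * n * c ^ 2) = (τ : ℝ) ^ (-(β ^ 2) / 2) := by
    rw [mul_pow, sq_sqrt (by positivity), rpow_def_of_pos (by linarith)]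
    congr 1
    field_simp
    ring
  have hsum : Measurable fun ω ↦ (n : ℝ)⁻¹ * ∑ i ∈ range n, X i ω :=
    (Finset.measurable_sum _ fun i _ ↦ hmeas i).const_mul _
  calc _ ≤ 2 * c + μ.real {ω | m + c ≤ (n : ℝ)⁻¹ * ∑ i ∈ range n, X i ω} :=
        integral_max_zero_min_add_zero_sub_le hsum hc hm
    _ ≤ 2 * c + exp (-2 * n * c ^ 2) := by rw [hevent]; gcongr
    _ ≤ _ := by rw [htail]; gcongr

end

lemma sum_range_inv_sqrt_succ_le (n : ℕ) : ∑ k ∈ range n, (√((k : ℝ) + 1))⁻¹ ≤ 2 * √n := by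
  induction n with
  | zero => simp
  | succ n ih =>
    have hs := sq_sqrt (Nat.cast_nonneg n : (0 : ℝ) ≤ n)
    have hu := sq_sqrt (by positivity : (0 : ℝ) ≤ n + 1)
    have hu0 : 0 < √((n : ℝ) + 1) := sqrt_pos.2 (by positivity)
    have hstep : (√((n : ℝ) + 1))⁻¹ ≤ 2 * (√((n : ℝ) + 1) - √n) := by
      rw [inv_le_iff_one_le_mul₀' hu0]
      nlinarith [sq_nonneg (√((n : ℝ) + 1) - √n)]
    rw [sum_range_succ, Nat.cast_succ]
    linarith

lemma sum_Icc_two_inv_sqrt_sub_one_le (h : ℕ) :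
    ∑ a ∈ Icc 2 h, (√((a : ℝ) - 1))⁻¹ ≤ 2 * √h := by
  rw [← Ico_add_one_right_eq_Icc, sum_Ico_eq_sum_range]
  calc _ = ∑ k ∈ range (h + 1 - 2), (√((k : ℝ) + 1))⁻¹ := by
        refine sum_congr rfl fun k _ ↦ ?_
        push_cast
        ring_nf
    _ ≤ 2 * √(h + 1 - 2 : ℕ) := sum_range_inv_sqrt_succ_le _
    _ ≤ 2 * √h := by gcongr; omega

lemma sum_natCast_rpow_le_tsum_add_one {p : ℝ} (hp : p < -1) (s : Finset ℕ) :
    ∑ n ∈ s, (n : ℝ) ^ p ≤ ∑' n : ℕ, ((n : ℝ) + 1) ^ p := by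
  have hsum := summable_nat_rpow.2 hp
  calc _ ≤ ∑' n : ℕ, (n : ℝ) ^ p := hsum.sum_le_tsum s fun n _ ↦ rpow_nonneg n.cast_nonneg _
    _ = _ := by
      rw [hsum.tsum_eq_zero_add]
      simp [zero_rpow (by linarith : p ≠ 0)]

theorem ucb_overestimate_sum_bound_general
    {Ω : Type*} {m0 : MeasurableSpace Ω} (μ : Measure Ω) [IsProbabilityMeasure μ]
    (X : ℕ → Ω → ℝ) (hmeas : ∀ i, Measurable (X i))
    (hindep : iIndepFun X μ)
    (hident : ∀ i, IdentDistrib (X i) (X 0) μ μ)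
    (hbdd : ∀ i, ∀ᵐ ω ∂μ, X i ω ∈ Set.Icc (-1 : ℝ) 0)
    (m : ℝ) (hm : m = ∫ ω, X 0 ω ∂μ)
    (β : ℝ) (hβ : Real.sqrt 2 < β)
    (T h : ℕ)
    (t : ℕ → ℕ)
    (hmono : ∀ a, 2 ≤ a → a < h → t a < t (a + 1))
    (hrange : ∀ a, 2 ≤ a → a ≤ h → 1 ≤ t a ∧ t a ≤ T) :
    ∑ a ∈ Finset.Icc 2 h,
        ∫ ω, max 0
          ((min ((1 / ((a : ℝ) - 1)) * ∑ i ∈ Finset.range (a - 1), X i ω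
              + β * Real.sqrt (Real.log (t a) / (4 * ((a : ℝ) - 1)))) 0) - m) ∂μ
      ≤ 2 * β * Real.sqrt ((h : ℝ) * Real.log T)
        + ∑' n : ℕ, ((n : ℝ) + 1) ^ (-(β ^ 2) / 2) := by
  have hβ0 : 0 ≤ β := (sqrt_nonneg 2).trans hβ.le
  have hp : -(β ^ 2) / 2 < -1 := by
    have := (sqrt_lt' (by linarith [sqrt_nonneg 2])).1 hβ
    linarith
  have hmean : ∀ i, μ[X i] = m := fun i ↦ hm ▸ (hident i).integral_eq
  have hm1 : -1 ≤ m := by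
    have hint := Integrable.of_mem_Icc (-1) 0 (hmeas 0).aemeasurable (hbdd 0)
    simpa [hm] using integral_mono_ae (integrable_const (-1)) hint ((hbdd 0).mono fun _ hω ↦ hω.1)
  have hinj : Set.InjOn t (Icc 2 h) := by
    rw [coe_Icc]
    refine (strictMonoOn_of_lt_succ (f := t) Set.ordConnected_Icc fun a _ ha hsucc ↦ ?_).injOn
    exact hmono a ha.1 (by simpa using hsucc.2)
  calc _ ≤ ∑ a ∈ Icc 2 h, (β * √(log T) * (√((a : ℝ) - 1))⁻¹ + (t a : ℝ) ^ (-(β ^ 2) / 2)) := by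
        refine sum_le_sum fun a ha ↦ ?_
        obtain ⟨ha2, hah⟩ := mem_Icc.1 ha
        have hcast : (a : ℝ) - 1 = ((a - 1 : ℕ) : ℝ) := by rw [Nat.cast_sub (by omega)]; simp
        rw [hcast, one_div]
        exact integral_ucb_overestimate_le hindep hmeas hbdd hmean hm1 hβ0 (by omega)
          (hrange a ha2 hah).1 (hrange a ha2 hah).2
    _ = β * √(log T) * ∑ a ∈ Icc 2 h, (√((a : ℝ) - 1))⁻¹
          + ∑ n ∈ (Icc 2 h).image t, (n : ℝ) ^ (-(β ^ 2) / 2) := by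
        rw [sum_add_distrib, mul_sum, sum_image hinj]
    _ ≤ β * √(log T) * (2 * √h) + ∑' n : ℕ, ((n : ℝ) + 1) ^ (-(β ^ 2) / 2) := by
        gcongr
        · exact sum_Icc_two_inv_sqrt_sub_one_le h
        · exact sum_natCast_rpow_le_tsum_add_one hp _
    _ = _ := by rw [sqrt_mul (Nat.cast_nonneg h)]; ring

/-- Per-arm overestimation bound: the cumulative expected amount by which the truncated UCB
estimate exceeds the true mean, over the successive plays of an arm occurring at strictly
increasing time slots `t a ≤ T`, is at most `2β√(h log T) + G_β`. -/
theorem ucb_overestimate_sum_bound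
    {Ω : Type*} {m0 : MeasurableSpace Ω} (μ : Measure Ω) [IsProbabilityMeasure μ]
    (X : ℕ → Ω → ℝ) (hmeas : ∀ i, Measurable (X i))
    (hindep : iIndepFun X μ)
    (hident : ∀ i, IdentDistrib (X i) (X 0) μ μ)
    (hbdd : ∀ i, ∀ᵐ ω ∂μ, X i ω ∈ Set.Icc (-1 : ℝ) 0)
    (m : ℝ) (hm : m = ∫ ω, X 0 ω ∂μ)
    (β : ℝ) (hβ : Real.sqrt 2 < β)
    (T h : ℕ) (hT : 1 ≤ T) (hh : h ≤ T)
    (t : ℕ → ℕ)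
    (hmono : ∀ a, 2 ≤ a → a < h → t a < t (a + 1))
    (hrange : ∀ a, 2 ≤ a → a ≤ h → 1 ≤ t a ∧ t a ≤ T) :
    ∑ a ∈ Finset.Icc 2 h,
        ∫ ω, max 0
          ((min ((1 / ((a : ℝ) - 1)) * ∑ i ∈ Finset.range (a - 1), X i ω
              + β * Real.sqrt (Real.log (t a) / (4 * ((a : ℝ) - 1)))) 0) - m) ∂μ
      ≤ 2 * β * Real.sqrt ((h : ℝ) * Real.log T)
        + ∑' n : ℕ, ((n : ℝ) + 1) ^ (-(β ^ 2) / 2) :=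
  ucb_overestimate_sum_bound_general (m0 := m0) μ X hmeas hindep hident hbdd m hm β hβ T h t hmono
    hrange
end

section
/- Work on a probability space (Ω, 𝓕, P). Let (X_i)_{i≥1} be independent, identically distributed real-valued random variables with X_i ∈ [−1, 0] almost surely and common mean m = E[X_1] (so m ∈ [−1, 0]); write x̂_n := (1/n)·Σ_{i=1}^{n} X_i for the sample mean of the first n observations. Then for all integers n ≥ 1 and t ≥ 1 and every real β ≥ 0, E[ max(0, m − min( x̂_n + β·√( log(t) / (4n) ), 0 )) ] ≤ t^{−β²/2}. -/
/-!
With `ε = β √(log t / (4n))`, the integrand vanishes unless `x̂ₙ + ε ≤ m`, and it is at most `1`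
because `m ≤ 0 ≤ 1 + x̂ₙ`; so the expectation is at most `P(x̂ₙ + ε ≤ m)`. Hoeffding's inequality
for the centred variables `m - Xᵢ`, each ranging over an interval of length `1`, bounds this
probability by `exp (-2nε²) = t^(-β²/2)`.
-/

open MeasureTheory ProbabilityTheory Finset

lemma max_zero_sub_min_zero_le_indicator {m y : ℝ} (hm : m ≤ 0) (hy : -1 ≤ y) :
    max 0 (m - min y 0) ≤ (Set.Iic m).indicator 1 y := by
  by_cases hym : y ≤ m
  · rw [Set.indicator_of_mem (Set.mem_Iic.2 hym), Pi.one_apply]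
    exact max_le zero_le_one (by linarith [le_min hy neg_one_lt_zero.le])
  · rw [Set.indicator_of_notMem (mt Set.mem_Iic.1 hym)]
    exact max_le le_rfl (sub_nonpos.2 (le_min (not_le.1 hym).le hm))

lemma le_one_div_mul_sum {ι : Type*} {s : Finset ι} (hs : s.Nonempty) {x : ι → ℝ} {a : ℝ}
    (h : ∀ i ∈ s, a ≤ x i) : a ≤ (1 / (#s : ℝ)) * ∑ i ∈ s, x i := by
  rw [one_div_mul_eq_div, ← expect_eq_sum_div_card]
  exact le_expect hs h

lemma integral_le_measureReal_of_le_indicator {Ω : Type*} {m0 : MeasurableSpace Ω}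
    {μ : Measure Ω} [IsFiniteMeasure μ] {f : Ω → ℝ} {s : Set Ω} (hs : MeasurableSet s)
    (hf : 0 ≤ᵐ[μ] f) (hfs : f ≤ᵐ[μ] s.indicator 1) : ∫ ω, f ω ∂μ ≤ μ.real s :=
  (integral_mono_of_nonneg hf ((integrable_const 1).indicator hs) hfs).trans_eq
    (integral_indicator_one hs)

lemma measureReal_sampleMean_add_le_le_of_iIndepFun {Ω : Type*} {m0 : MeasurableSpace Ω}
    {μ : Measure Ω} [IsProbabilityMeasure μ] {X : ℕ → Ω → ℝ} (hmeas : ∀ i, AEMeasurable (X i) μ)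
    (hindep : iIndepFun X μ) {a b m : ℝ} (hbdd : ∀ i, ∀ᵐ ω ∂μ, X i ω ∈ Set.Icc a b)
    (hmean : ∀ i, μ[X i] = m) {n : ℕ} (hn : 0 < n) {ε : ℝ} (hε : 0 ≤ ε) :
    μ.real {ω | (1 / (n : ℝ)) * ∑ i ∈ range n, X i ω + ε ≤ m}
      ≤ Real.exp (-2 * n * ε ^ 2 / (b - a) ^ 2) := by
  have hn0 : (n : ℝ) ≠ 0 := by positivity
  have hsubG : ∀ i < n, HasSubgaussianMGF (fun ω ↦ m - X i ω) ((‖b - a‖₊ / 2) ^ 2) μ := by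
    intro i _
    have h := hasSubgaussianMGF_of_mem_Icc (hmeas i).neg
      (a := -b) (b := -a) ((hbdd i).mono fun ω hω ↦ ⟨neg_le_neg hω.2, neg_le_neg hω.1⟩)
    simpa only [Pi.neg_apply, integral_neg, hmean i, sub_neg_eq_add, neg_add_eq_sub] using h
  have hsum := HasSubgaussianMGF.measure_sum_range_ge_le_of_iIndepFun
    (hindep.comp (fun _ x ↦ m - x) fun _ ↦ measurable_const.sub measurable_id) hsubG
    (mul_nonneg n.cast_nonneg hε)
  have hevent : {ω | (1 / (n : ℝ)) * ∑ i ∈ range n, X i ω + ε ≤ m}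
      ⊆ {ω | n * ε ≤ ∑ i ∈ range n, (m - X i ω)} := by
    intro ω hω
    simp only [Set.mem_ofPred_eq, sum_sub_distrib, sum_const, card_range, nsmul_eq_mul] at hω ⊢
    rw [one_div_mul_eq_div, div_add' _ _ _ hn0, div_le_iff₀ (by positivity)] at hω
    linarith
  refine (measureReal_mono hevent).trans (hsum.trans_eq ?_)
  congr 1
  push_cast
  rw [Real.norm_eq_abs, div_pow, sq_abs,
    show -((n:ℝ) * ε) ^ 2 = n * (-n * ε ^ 2) by ring,
    show 2 * (n:ℝ) * ((b - a) ^ 2 / 2 ^ 2) = n * ((b - a) ^ 2 / 2) by ring,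
    mul_div_mul_left _ _ hn0, div_div_eq_mul_div]
  ring

/-- Underestimation bound: the expected amount by which the true mean exceeds the truncated
UCB estimate after `n` observations is at most `t^{-β²/2}`. -/
theorem ucb_underestimate_bound
    {Ω : Type*} {m0 : MeasurableSpace Ω} (μ : Measure Ω) [IsProbabilityMeasure μ]
    (X : ℕ → Ω → ℝ) (hmeas : ∀ i, Measurable (X i))
    (hindep : iIndepFun X μ)
    (hident : ∀ i, IdentDistrib (X i) (X 0) μ μ)
    (hbdd : ∀ i, ∀ᵐ ω ∂μ, X i ω ∈ Set.Icc (-1 : ℝ) 0)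
    (m : ℝ) (hm : m = ∫ ω, X 0 ω ∂μ)
    (n t : ℕ) (hn : 1 ≤ n) (ht : 1 ≤ t) (β : ℝ) (hβ : 0 ≤ β) :
    ∫ ω, max 0
        (m - min ((1 / (n : ℝ)) * ∑ i ∈ Finset.range n, X i ω
            + β * Real.sqrt (Real.log t / (4 * (n : ℝ)))) 0) ∂μ
      ≤ (t : ℝ) ^ (-(β ^ 2) / 2) := by
  set ε := β * Real.sqrt (Real.log t / (4 * (n : ℝ)))
  set mean := fun ω ↦ (1 / (n : ℝ)) * ∑ i ∈ range n, X i ω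
  have hε : 0 ≤ ε := by positivity
  have hlog : 0 ≤ Real.log t := Real.log_nonneg (by exact_mod_cast ht)
  have hmean : ∀ i, μ[X i] = m := fun i ↦ hm ▸ (hident i).integral_eq
  have hm0 : m ≤ 0 := hm ▸ integral_nonpos_of_ae ((hbdd 0).mono fun _ h ↦ h.2)
  have hmean_ge : ∀ᵐ ω ∂μ, -1 ≤ mean ω := by
    filter_upwards [ae_all_iff.2 hbdd] with ω hω
    simpa only [card_range] using le_one_div_mul_sum ⟨0, mem_range.2 hn⟩ fun i _ ↦ (hω i).1
  calc ∫ ω, max 0 (m - min (mean ω + ε) 0) ∂μ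
      ≤ μ.real {ω | mean ω + ε ≤ m} := by
        refine integral_le_measureReal_of_le_indicator
          (measurableSet_le (by fun_prop) measurable_const)
          (ae_of_all _ fun _ ↦ le_max_left _ _) ?_
        filter_upwards [hmean_ge] with ω hω
        exact max_zero_sub_min_zero_le_indicator hm0 (by linarith)
    _ ≤ Real.exp (-2 * n * ε ^ 2 / (0 - -1) ^ 2) :=
        measureReal_sampleMean_add_le_le_of_iIndepFun (fun i ↦ (hmeas i).aemeasurable) hindep
          hbdd hmean hn hε
    _ = (t : ℝ) ^ (-(β ^ 2) / 2) := by
        rw [Real.rpow_def_of_pos (by exact_mod_cast ht), mul_pow, Real.sq_sqrt (by positivity)]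
        congr 1
        norm_num
        field_simp
        ring
end

section
/- Work on a probability space (Ω, 𝓕, P). Let (X_i)_{i≥1} be independent, identically distributed real-valued random variables with X_i ∈ [c, c+1] almost surely (an interval of length 1, for some real c) and common mean m = E[X_1]; write x̂_n := (1/n)·Σ_{i=1}^{n} X_i for the sample mean of the first n observations. Let β > √2, let h ≥ 2 be an integer, and let t_2 < t_3 < ⋯ < t_h be strictly increasing integers with t_a ≥ 1 for all a. Then Σ_{a=2}^{h} P( x̂_{a−1} − m > β·√( log(t_a) / (4·(a−1)) ) ) ≤ G_β, where G_β := Σ_{t=1}^{∞} t^{−β²/2} (which is finite for β > √2). -/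
open MeasureTheory ProbabilityTheory

/-
Each summand is a Hoeffding bound: `a - 1` independent observations with values in an interval
of length one give `P(x̂_{a-1} - m > r) ≤ exp (-2 (a - 1) r²)`, and the confidence radius at time
`t_a` is chosen so that this equals `t_a ^ (-β²/2)`. As the `t_a` are distinct positive integers,
these terms form part of the series `G_β`, which converges because `β² / 2 > 1`.
-/

open Real

section Hoeffding

variable {Ω : Type*} {m0 : MeasurableSpace Ω} {μ : Measure Ω} [IsProbabilityMeasure μ]
  {X : ℕ → Ω → ℝ} {c m : ℝ}

theorem measureReal_sum_range_sub_ge_le (hmeas : ∀ i, AEMeasurable (X i) μ)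
    (hindep : iIndepFun X μ) (hbdd : ∀ i, ∀ᵐ ω ∂μ, X i ω ∈ Set.Icc c (c + 1))
    (hmean : ∀ i, μ[X i] = m) (n : ℕ) {r : ℝ} (hr : 0 ≤ r) :
    μ.real {ω | n * r ≤ ∑ i ∈ Finset.range n, (X i ω - m)} ≤ exp (-2 * n * r ^ 2) := by
  have hsubG : ∀ i < n, HasSubgaussianMGF (fun ω ↦ X i ω - m) (1 / 4) μ := by
    intro i _
    have h := hasSubgaussianMGF_of_mem_Icc (hmeas i) (hbdd i)
    rw [hmean i] at h
    convert h using 1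
    ext
    norm_num
  have hindep' : iIndepFun (fun i ω ↦ X i ω - m) μ :=
    hindep.comp (fun _ x ↦ x - m) fun _ ↦ measurable_id.sub_const m
  refine (HasSubgaussianMGF.measure_sum_range_ge_le_of_iIndepFun hindep' hsubG
    (by positivity)).trans_eq ?_
  rcases n.eq_zero_or_pos with rfl | hn
  · simp
  · congr 1
    push_cast
    field_simp
    ring

theorem measureReal_radius_lt_sampleMean_sub_le_rpow (hmeas : ∀ i, AEMeasurable (X i) μ)
    (hindep : iIndepFun X μ) (hbdd : ∀ i, ∀ᵐ ω ∂μ, X i ω ∈ Set.Icc c (c + 1))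
    (hmean : ∀ i, μ[X i] = m) {β : ℝ} (hβ : 0 ≤ β) {n : ℕ} (hn : 0 < n) {T : ℝ} (hT : 1 ≤ T) :
    μ.real {ω | β * √(log T / (4 * n)) < 1 / n * ∑ i ∈ Finset.range n, X i ω - m}
      ≤ T ^ (-β ^ 2 / 2) := by
  set r := β * √(log T / (4 * n))
  have hn' : (0 : ℝ) < n := by exact_mod_cast hn
  have hsub : {ω | r < 1 / n * ∑ i ∈ Finset.range n, X i ω - m}
      ⊆ {ω | n * r ≤ ∑ i ∈ Finset.range n, (X i ω - m)} := by
    intro ω hω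
    simp only [Set.mem_ofPred_eq, Finset.sum_sub_distrib, Finset.sum_const, Finset.card_range,
      nsmul_eq_mul] at hω ⊢
    rw [one_div_mul_eq_div, lt_sub_iff_add_lt, lt_div_iff₀ hn'] at hω
    linarith
  have hr2 : r ^ 2 = β ^ 2 * (log T / (4 * n)) := by
    rw [mul_pow, sq_sqrt (by have := log_nonneg hT; positivity)]
  calc μ.real {ω | r < 1 / n * ∑ i ∈ Finset.range n, X i ω - m}
      ≤ exp (-2 * n * r ^ 2) :=
        (measureReal_mono hsub).trans
          (measureReal_sum_range_sub_ge_le hmeas hindep hbdd hmean n (by positivity))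
    _ = T ^ (-β ^ 2 / 2) := by
        rw [rpow_def_of_pos (by linarith), hr2]
        congr 1
        field_simp
        ring

end Hoeffding

theorem Finset.sum_comp_le_tsum_of_injOn {ι κ : Type*} {f : κ → ℝ} (hf : Summable f)
    (hf0 : ∀ k, 0 ≤ f k) {s : Finset ι} {g : ι → κ} (hg : Set.InjOn g s) :
    ∑ i ∈ s, f (g i) ≤ ∑' k, f k := by
  classical
  rw [← Finset.sum_image hg]
  exact hf.sum_le_tsum _ fun k _ ↦ hf0 k

theorem sum_bad_event_prob_le_Gbeta_general
    {Ω : Type*} {m0 : MeasurableSpace Ω} (μ : Measure Ω) [IsProbabilityMeasure μ]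
    (X : ℕ → Ω → ℝ) (hmeas : ∀ i, Measurable (X i))
    (hindep : iIndepFun X μ)
    (hident : ∀ i, IdentDistrib (X i) (X 0) μ μ)
    (c : ℝ) (hbdd : ∀ i, ∀ᵐ ω ∂μ, X i ω ∈ Set.Icc c (c + 1))
    (m : ℝ) (hm : m = ∫ ω, X 0 ω ∂μ)
    (β : ℝ) (hβ : Real.sqrt 2 < β)
    (h : ℕ)
    (t : ℕ → ℕ)
    (hmono : ∀ a, 2 ≤ a → a < h → t a < t (a + 1))
    (hpos : ∀ a, 2 ≤ a → a ≤ h → 1 ≤ t a) :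
    ∑ a ∈ Finset.Icc 2 h,
        (μ {ω | β * Real.sqrt (Real.log (t a) / (4 * ((a : ℝ) - 1)))
            < (1 / ((a : ℝ) - 1)) * (∑ i ∈ Finset.range (a - 1), X i ω) - m}).toReal
      ≤ ∑' n : ℕ, ((n : ℝ) + 1) ^ (-(β ^ 2) / 2) := by
  have hmean : ∀ i, μ[X i] = m := fun i ↦ hm ▸ (hident i).integral_eq
  have hβ0 : 0 ≤ β := (sqrt_nonneg 2).trans hβ.le
  have hexp : -(β ^ 2) / 2 < -1 := by
    have := (sqrt_lt' ((sqrt_pos.2 two_pos).trans hβ)).1 hβ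
    linarith
  have hsummable : Summable fun n : ℕ ↦ ((n : ℝ) + 1) ^ (-(β ^ 2) / 2) := by
    exact_mod_cast (summable_nat_add_iff 1).2 (summable_nat_rpow.2 hexp)
  have hinj : Set.InjOn (fun a ↦ t a - 1) (Finset.Icc 2 h) := by
    have hstrict : StrictMonoOn t (Set.Icc 2 h) :=
      strictMonoOn_of_lt_add_one Set.ordConnected_Icc fun a _ ha ha' ↦ hmono a ha.1 ha'.2
    intro a ha b hb hab
    simp only [Finset.coe_Icc] at ha hb
    have := hpos a ha.1 ha.2
    have := hpos b hb.1 hb.2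
    exact hstrict.injOn ha hb (by simp only at hab; omega)
  calc _ ≤ ∑ a ∈ Finset.Icc 2 h, (((t a - 1 : ℕ) : ℝ) + 1) ^ (-(β ^ 2) / 2) := by
        refine Finset.sum_le_sum fun a ha ↦ ?_
        rw [Finset.mem_Icc] at ha
        have hta := hpos a ha.1 ha.2
        have := measureReal_radius_lt_sampleMean_sub_le_rpow (fun i ↦ (hmeas i).aemeasurable)
          hindep hbdd hmean hβ0 (n := a - 1) (by omega) (T := t a) (by exact_mod_cast hta)
        rw [Nat.cast_sub hta, Nat.cast_one, sub_add_cancel]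
        rwa [Nat.cast_sub (by omega : 1 ≤ a), Nat.cast_one] at this
    _ ≤ _ := Finset.sum_comp_le_tsum_of_injOn (f := fun n : ℕ ↦ ((n : ℝ) + 1) ^ (-(β ^ 2) / 2))
        hsummable (fun _ ↦ by positivity) hinj

/-- The total probability of the bad events, in which the empirical mean after `a - 1`
observations overestimates the true mean by more than the confidence radius at the distinct
positive time slots `t a`, is at most the convergent series `G_β`. -/
theorem sum_bad_event_prob_le_Gbeta
    {Ω : Type*} {m0 : MeasurableSpace Ω} (μ : Measure Ω) [IsProbabilityMeasure μ]
    (X : ℕ → Ω → ℝ) (hmeas : ∀ i, Measurable (X i))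
    (hindep : iIndepFun X μ)
    (hident : ∀ i, IdentDistrib (X i) (X 0) μ μ)
    (c : ℝ) (hbdd : ∀ i, ∀ᵐ ω ∂μ, X i ω ∈ Set.Icc c (c + 1))
    (m : ℝ) (hm : m = ∫ ω, X 0 ω ∂μ)
    (β : ℝ) (hβ : Real.sqrt 2 < β)
    (h : ℕ) (hh : 2 ≤ h)
    (t : ℕ → ℕ)
    (hmono : ∀ a, 2 ≤ a → a < h → t a < t (a + 1))
    (hpos : ∀ a, 2 ≤ a → a ≤ h → 1 ≤ t a) :
    ∑ a ∈ Finset.Icc 2 h,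
        (μ {ω | β * Real.sqrt (Real.log (t a) / (4 * ((a : ℝ) - 1)))
            < (1 / ((a : ℝ) - 1)) * (∑ i ∈ Finset.range (a - 1), X i ω) - m}).toReal
      ≤ ∑' n : ℕ, ((n : ℝ) + 1) ^ (-(β ^ 2) / 2) :=
  sum_bad_event_prob_le_Gbeta_general (m0 := m0) μ X hmeas hindep hident c hbdd m hm β hβ h t hmono
    hpos
end
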